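/- arXiv:2108.10130 — 3 statements merged into one kernel-verified Lean document; each statement's English description precedes it below -/
import Mathlib

section
/- Let V be a d×d real positive definite matrix, let s_1,…,s_T be finite index sets, and let x_t(i) ∈ ℝ^d for t ∈ [T], i ∈ s_t. Define V_0 = V and V_t = V + ∑_{τ=1}^t ∑_{i∈s_τ} x_τ(i)x_τ(i)ᵀ, and write ‖a‖²_M = aᵀMa. Then det(V_T) ≥ det(V)·∏_{t=1}^T (1 + ∑_{i∈s_t} ‖x_t(i)‖²_{V_{t-1}^{-1}}). -/
open Matrix BigOperators

lemma aux_one_add_sum_le_prod {ι : Type*} (s : Finset ι) (f : ι → ℝ)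
    (hf : ∀ i ∈ s, 0 ≤ f i) : 1 + ∑ i ∈ s, f i ≤ ∏ i ∈ s, (1 + f i) := by
  induction s using Finset.cons_induction with
  | empty => simp
  | cons a s ha ih =>
    rw [Finset.sum_cons, Finset.prod_cons]
    have h1 : 0 ≤ f a := hf a (Finset.mem_cons_self a s)
    have h2 : ∀ i ∈ s, 0 ≤ f i := fun i hi => hf i (Finset.mem_cons_of_mem hi)
    have h3 := ih h2
    have hs : 0 ≤ ∑ i ∈ s, f i := Finset.sum_nonneg h2
    nlinarith

lemma aux_det_one_add {d : ℕ} {M : Matrix (Fin d) (Fin d) ℝ} (hM : M.PosSemidef) :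
    1 + M.trace ≤ (1 + M).det := by
  have h := hM.1
  set U : Matrix (Fin d) (Fin d) ℝ := (h.eigenvectorUnitary : Matrix (Fin d) (Fin d) ℝ)
  have hUU : U * star U = 1 := (Matrix.mem_unitaryGroup_iff).mp h.eigenvectorUnitary.2
  have hUU' : star U * U = 1 := (Matrix.mem_unitaryGroup_iff').mp h.eigenvectorUnitary.2
  have hspec : M = U * diagonal (RCLike.ofReal ∘ h.eigenvalues) * star U := h.spectral_theorem
  have hdiag : (1 : Matrix (Fin d) (Fin d) ℝ) + M
      = U * (diagonal (fun i => 1 + h.eigenvalues i)) * star U := by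
    have : (diagonal (fun i => (1:ℝ) + h.eigenvalues i))
        = 1 + diagonal (RCLike.ofReal ∘ h.eigenvalues) := by
      rw [← diagonal_one, diagonal_add]; rfl
    rw [this, mul_add, add_mul, mul_one, hUU, ← hspec]
  have hdetU : U.det * (star U).det = 1 := by
    rw [← det_mul, hUU, det_one]
  have htr : M.trace = ∑ i, h.eigenvalues i := by
    conv_lhs => rw [hspec]
    rw [trace_mul_comm, ← mul_assoc, hUU', one_mul, trace_diagonal]
    simp
  have hdet : (1 + M).det = ∏ i, (1 + h.eigenvalues i) := by
    rw [hdiag, det_mul, det_mul, det_diagonal]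
    rw [mul_comm U.det, mul_assoc, hdetU, mul_one]
  rw [hdet, htr]
  exact aux_one_add_sum_le_prod Finset.univ _ (fun i _ => hM.eigenvalues_nonneg i)

open scoped MatrixOrder in
lemma aux_det_step {d : ℕ} {A X : Matrix (Fin d) (Fin d) ℝ}
    (hA : A.PosDef) (hX : X.PosSemidef) :
    A.det * (1 + (A⁻¹ * X).trace) ≤ (A + X).det := by
  set S := CFC.sqrt A with hSdef
  have hSS : S * S = A := CFC.sqrt_mul_sqrt_self A hA.posSemidef.nonneg
  have hSpsd : S.PosSemidef := (CFC.sqrt_nonneg A).posSemidef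
  have hdetS : S.det * S.det = A.det := by rw [← det_mul, hSS]
  have hdS : S.det ≠ 0 := by
    intro h0; rw [h0, mul_zero] at hdetS; exact hA.det_pos.ne' hdetS.symm
  have hU : IsUnit S.det := hdS.isUnit
  have hSinv : S * S⁻¹ = 1 := mul_nonsing_inv S hU
  have hSinv' : S⁻¹ * S = 1 := nonsing_inv_mul S hU
  set M := S⁻¹ * X * S⁻¹ with hMdef
  have hMpsd : M.PosSemidef := by
    have := hX.mul_mul_conjTranspose_same S⁻¹
    rwa [conjTranspose_nonsing_inv, hSpsd.1.eq] at this
  have hAX : A + X = S * (1 + M) * S := by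
    rw [mul_add, add_mul, mul_one, hSS, hMdef]
    congr 1
    symm
    calc S * (S⁻¹ * X * S⁻¹) * S = (S * S⁻¹) * X * (S⁻¹ * S) := by
          simp only [mul_assoc]
      _ = X := by rw [hSinv, hSinv', one_mul, mul_one]
  have hAinv : A⁻¹ = S⁻¹ * S⁻¹ := by rw [← hSS, Matrix.mul_inv_rev]
  have htr : (A⁻¹ * X).trace = M.trace := by
    rw [hAinv, hMdef, mul_assoc, trace_mul_comm]
  have hdet : (A + X).det = A.det * (1 + M).det := by
    rw [hAX, det_mul, det_mul]
    rw [mul_comm S.det, mul_assoc, ← hdetS]; ring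
  rw [hdet, htr]
  exact mul_le_mul_of_nonneg_left (aux_det_one_add hMpsd) hA.det_pos.le

lemma aux_trace_sum {d k : ℕ} (A : Matrix (Fin d) (Fin d) ℝ) (s : Finset (Fin k))
    (x : Fin k → (Fin d → ℝ)) :
    (A * ∑ i ∈ s, vecMulVec (x i) (x i)).trace
      = ∑ i ∈ s, x i ⬝ᵥ A.mulVec (x i) := by
  rw [Finset.mul_sum, trace_sum]
  refine Finset.sum_congr rfl fun i _ => ?_
  simp only [trace, diag_apply, mul_apply, vecMulVec_apply, dotProduct, mulVec, Finset.mul_sum]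
  exact Finset.sum_congr rfl fun a _ => Finset.sum_congr rfl fun b _ => by ring

/-- Telescoped determinant inequality:
det(V_T) ≥ det(V)·∏_{t=1}^T (1 + ∑_{i∈s_t} ‖x_t(i)‖²_{V_{t-1}⁻¹}). -/
theorem stmt4 {d k : ℕ} (T : ℕ)
    (V : Matrix (Fin d) (Fin d) ℝ) (hV : V.PosDef)
    (s : ℕ → Finset (Fin k)) (x : ℕ → Fin k → (Fin d → ℝ))
    (Vmat : ℕ → Matrix (Fin d) (Fin d) ℝ)
    (hVmat : ∀ t, Vmat t =
      V + ∑ τ ∈ Finset.range t, ∑ i ∈ s τ, vecMulVec (x τ i) (x τ i)) :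
    V.det * ∏ t ∈ Finset.range T,
        (1 + ∑ i ∈ s t, x t i ⬝ᵥ (Vmat t)⁻¹.mulVec (x t i))
      ≤ (Vmat T).det := by
  have hpsd : ∀ (u : Finset (Fin k)) (y : Fin k → Fin d → ℝ),
      (∑ i ∈ u, vecMulVec (y i) (y i)).PosSemidef := by
    intro u y
    induction u using Finset.cons_induction with
    | empty => simpa using (PosSemidef.zero : (0 : Matrix (Fin d) (Fin d) ℝ).PosSemidef)
    | cons i u hi ih => ?_
    rw [Finset.sum_cons]
    refine PosSemidef.add ?_ ih
    have : vecMulVec (y i) (y i) = replicateCol (Fin 1) (y i) * (replicateCol (Fin 1) (y i))ᴴ := by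
      rw [vecMulVec_eq (Fin 1), conjTranspose_replicateCol]
      simp
      convert rfl
    rw [this]
    exact posSemidef_self_mul_conjTranspose _
  have hpos : ∀ t, (Vmat t).PosDef := by
    intro t
    rw [hVmat t]
    refine hV.add_posSemidef ?_
    induction (Finset.range t) using Finset.cons_induction with
    | empty => simpa using (PosSemidef.zero : (0 : Matrix (Fin d) (Fin d) ℝ).PosSemidef)
    | cons τ u hτ ih => ?_
    rw [Finset.sum_cons]
    exact PosSemidef.add (hpsd (s τ) (x τ)) ih
  induction T with
  | zero =>
    rw [Finset.prod_range_zero, mul_one, hVmat 0, Finset.range_zero, Finset.sum_empty,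
      add_zero]
  | succ T ih =>
    rw [Finset.prod_range_succ, ← mul_assoc]
    have hstep : (Vmat T).det * (1 + ∑ i ∈ s T, x T i ⬝ᵥ (Vmat T)⁻¹.mulVec (x T i))
        ≤ (Vmat (T + 1)).det := by
      have h1 : Vmat (T + 1) = Vmat T + ∑ i ∈ s T, vecMulVec (x T i) (x T i) := by
        rw [hVmat, hVmat, Finset.sum_range_succ, add_assoc]
      have h2 := aux_det_step (hpos T) (hpsd (s T) (x T))
      rw [aux_trace_sum] at h2
      rw [h1]
      exact h2
    have hfac : 0 ≤ 1 + ∑ i ∈ s T, x T i ⬝ᵥ (Vmat T)⁻¹.mulVec (x T i) := by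
      have hnn : ∀ i ∈ s T, 0 ≤ x T i ⬝ᵥ (Vmat T)⁻¹.mulVec (x T i) := by
        intro i _
        simpa using (hpos T).inv.posSemidef.dotProduct_mulVec_nonneg (x T i)
      have := Finset.sum_nonneg hnn
      linarith
    calc V.det * (∏ t ∈ Finset.range T,
            (1 + ∑ i ∈ s t, x t i ⬝ᵥ (Vmat t)⁻¹.mulVec (x t i)))
          * (1 + ∑ i ∈ s T, x T i ⬝ᵥ (Vmat T)⁻¹.mulVec (x T i))
        ≤ (Vmat T).det * (1 + ∑ i ∈ s T, x T i ⬝ᵥ (Vmat T)⁻¹.mulVec (x T i)) :=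
          mul_le_mul_of_nonneg_right ih hfac
      _ ≤ (Vmat (T + 1)).det := hstep
end

section
/- Combining the telescoped determinant inequality with the logarithm bound: if V_0 = λI_d with λ ≥ ℓ, |s_t| ≤ ℓ, ‖x_t(i)‖₂ ≤ 1, and V_T = λI_d + ∑_{t=1}^T∑_{i∈s_t}x_t(i)x_t(i)ᵀ, then ∑_{t=1}^T∑_{i∈s_t}‖x_t(i)‖²_{V_{t-1}^{-1}} ≤ 2 log det(V_T) − 2d log λ ≤ 2d log((λd + Tℓ)/(λd)). -/
/-!
Put `M_t = ∑_{i ∈ s_t} x_t(i) x_t(i)ᵀ` and `a_t = tr(V_t⁻¹ M_t)`, the round-`t` sum of squared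
`V_t⁻¹`-norms. Conjugating by `√V_t` gives `det(V_t + M_t) = det V_t · det(1 + N)` with `N ⪰ 0`,
`tr N = a_t`, and `det(1 + N) ≥ 1 + tr N` on eigenvalues, so
`log det V_{t+1} ≥ log det V_t + log(1 + a_t)`. As `V_t ⪰ λ I`, `a_t ≤ tr M_t / λ ≤ ℓ / λ ≤ 1`,
where `a ≤ 2 log(1 + a)`; telescoping gives the first inequality. The second is AM-GM on the
eigenvalues of `V_T`: `det V_T ≤ (tr V_T / d)^d ≤ ((λd + Tℓ)/d)^d`.
-/

open Matrix Real Finset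

lemma Finset.one_add_sum_le_prod_one_add {ι : Type*} (s : Finset ι) {f : ι → ℝ}
    (hf : ∀ i ∈ s, 0 ≤ f i) : 1 + ∑ i ∈ s, f i ≤ ∏ i ∈ s, (1 + f i) := by
  induction s using Finset.cons_induction with
  | empty => simp
  | cons a s _ ih =>
    rw [sum_cons, prod_cons]
    have hfa := hf a (mem_cons_self a s)
    have hs := ih fun i hi => hf i (mem_cons_of_mem hi)
    have hsum : 0 ≤ ∑ i ∈ s, f i := sum_nonneg fun i hi => hf i (mem_cons_of_mem hi)
    nlinarith

lemma Finset.prod_le_sum_div_card_pow {ι : Type*} (s : Finset ι) {f : ι → ℝ}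
    (hf : ∀ i ∈ s, 0 ≤ f i) : ∏ i ∈ s, f i ≤ ((∑ i ∈ s, f i) / #s) ^ #s := by
  rcases s.eq_empty_or_nonempty with rfl | hs
  · simp
  have hcard : (#s : ℝ) ≠ 0 := Nat.cast_ne_zero.mpr hs.card_ne_zero
  have amgm := geom_mean_le_arith_mean_weighted s (fun _ => (#s : ℝ)⁻¹) f
    (fun _ _ => by positivity) (by simp [hcard]) hf
  rw [← mul_sum, inv_mul_eq_div] at amgm
  calc ∏ i ∈ s, f i = (∏ i ∈ s, f i ^ (#s : ℝ)⁻¹) ^ #s := by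
        rw [← prod_pow]
        exact prod_congr rfl fun i hi => (rpow_inv_natCast_pow (hf i hi) hs.card_ne_zero).symm
    _ ≤ _ := pow_le_pow_left₀ (prod_nonneg fun i hi => rpow_nonneg (hf i hi) _) amgm _

lemma Real.self_le_two_mul_log_one_add {x : ℝ} (h0 : 0 ≤ x) (h2 : x ≤ 2) :
    x ≤ 2 * log (1 + x) := by
  have h := le_log_one_add_of_nonneg h0
  rw [div_le_iff₀ (by linarith)] at h
  nlinarith

lemma EuclideanSpace.dotProduct_self_eq_norm_sq {ι : Type*} [Fintype ι]
    (v : EuclideanSpace ℝ ι) : v.ofLp ⬝ᵥ v.ofLp = ‖v‖ ^ 2 := by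
  rw [← real_inner_self_eq_norm_sq, EuclideanSpace.inner_eq_star_dotProduct, star_trivial]

namespace Matrix

lemma trace_mul_vecMulVec_self {n R : Type*} [Fintype n] [CommRing R] (B : Matrix n n R)
    (v : n → R) : (B * vecMulVec v v).trace = v ⬝ᵥ B *ᵥ v := by
  rw [mul_vecMulVec, trace_vecMulVec, dotProduct_comm]

lemma trace_sum_vecMulVec_le_card {n ι : Type*} [Fintype n] (s : Finset ι)
    (v : ι → EuclideanSpace ℝ n) (hv : ∀ i ∈ s, ‖v i‖ ≤ 1) :
    (∑ i ∈ s, vecMulVec (v i).ofLp (v i).ofLp).trace ≤ #s := by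
  rw [trace_sum]
  calc ∑ i ∈ s, (vecMulVec (v i).ofLp (v i).ofLp).trace ≤ ∑ i ∈ s, (1 : ℝ) := by
        refine sum_le_sum fun i hi => ?_
        rw [trace_vecMulVec, EuclideanSpace.dotProduct_self_eq_norm_sq]
        exact pow_le_one₀ (norm_nonneg _) (hv i hi)
    _ = #s := by simp

lemma posDef_of_posSemidef_sub_smul_one {n : Type*} [DecidableEq n] {A : Matrix n n ℝ} {c : ℝ}
    (hc : 0 < c) (hA : (A - c • 1).PosSemidef) : A.PosDef := by
  simpa using (PosDef.one.smul hc).add_posSemidef hA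

variable {n : Type*} [Fintype n] [DecidableEq n]

lemma PosSemidef.one_add_trace_le_det_one_add {N : Matrix n n ℝ} (hN : N.PosSemidef) :
    1 + N.trace ≤ (1 + N).det := by
  have hH := hN.isHermitian
  set u := hH.eigenvectorUnitary
  have hconj :
      1 + N = Unitary.conjStarAlgAut ℝ _ u (diagonal fun i => 1 + hH.eigenvalues i) := by
    conv_lhs => rw [hH.spectral_theorem]
    rw [← map_one (Unitary.conjStarAlgAut ℝ _ u), ← map_add, ← diagonal_one, diagonal_add]
    rfl
  have hdet : (1 + N).det = ∏ i, (1 + hH.eigenvalues i) := by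
    rw [hconj, Unitary.conjStarAlgAut_apply, det_mul_right_comm, mem_unitaryGroup_iff.mp u.2,
      one_mul, det_diagonal]
  rw [hdet, hH.trace_eq_sum_eigenvalues]
  exact one_add_sum_le_prod_one_add _ fun i _ => hN.eigenvalues_nonneg i

lemma dotProduct_inv_mulVec_le {A : Matrix n n ℝ} {c : ℝ} (hc : 0 < c)
    (hA : (A - c • 1).PosSemidef) (v : n → ℝ) : v ⬝ᵥ A⁻¹ *ᵥ v ≤ (v ⬝ᵥ v) / c := by
  have hApd := posDef_of_posSemidef_sub_smul_one hc hA
  set y := A⁻¹ *ᵥ v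
  have hAy : A *ᵥ y = v := by
    rw [mulVec_mulVec, mul_nonsing_inv _ hApd.det_pos.ne'.isUnit, one_mulVec]
  have hy : c * (y ⬝ᵥ y) ≤ v ⬝ᵥ y := by
    have := hA.dotProduct_mulVec_nonneg y
    simp only [star_trivial, sub_mulVec, dotProduct_sub, smul_mulVec, one_mulVec, dotProduct_smul,
      smul_eq_mul, sub_nonneg, hAy] at this
    rwa [dotProduct_comm y v] at this
  have hsq : 0 ≤ (v - c • y) ⬝ᵥ (v - c • y) := sum_nonneg fun i _ => mul_self_nonneg _
  simp only [sub_dotProduct, dotProduct_sub, smul_dotProduct, dotProduct_smul, smul_eq_mul,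
    dotProduct_comm y v] at hsq
  -- `c ⟪v, y⟫ ≤ ‖v‖²` follows from `c ‖y‖² ≤ ⟪v, y⟫` and `0 ≤ ‖v - c y‖²`
  rw [le_div_iff₀ hc]
  nlinarith

open scoped MatrixOrder in
lemma PosDef.det_mul_one_add_trace_le_det_add {A M : Matrix n n ℝ} (hA : A.PosDef)
    (hM : M.PosSemidef) : A.det * (1 + (A⁻¹ * M).trace) ≤ (A + M).det := by
  set S := CFC.sqrt A
  have hS2 : S * S = A := CFC.sqrt_mul_sqrt_self A hA.posSemidef.nonneg
  have hS : S.IsHermitian := (CFC.sqrt_nonneg A).posSemidef.isHermitian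
  have hSdet : IsUnit S.det := by
    refine (isUnit_iff_ne_zero.mpr fun h => hA.det_pos.ne' ?_)
    rw [← hS2, det_mul, h, zero_mul]
  set N := S⁻¹ * M * S⁻¹
  have hN : N.PosSemidef := by
    have := hM.conjTranspose_mul_mul_same S⁻¹
    rwa [hS.inv.eq] at this
  have hsplit : A + M = S * (1 + N) * S := by
    simp only [N, Matrix.mul_add, Matrix.add_mul, Matrix.mul_one, ← Matrix.mul_assoc,
      mul_nonsing_inv _ hSdet, Matrix.one_mul, hS2]
    rw [Matrix.mul_assoc, nonsing_inv_mul _ hSdet, Matrix.mul_one]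
  have htr : N.trace = (A⁻¹ * M).trace := by
    rw [trace_mul_cycle, ← Matrix.mul_inv_rev, hS2]
  calc A.det * (1 + (A⁻¹ * M).trace) = A.det * (1 + N.trace) := by rw [htr]
    _ ≤ A.det * (1 + N).det :=
      mul_le_mul_of_nonneg_left hN.one_add_trace_le_det_one_add hA.det_pos.le
    _ = (A + M).det := by rw [hsplit, det_mul, det_mul, ← hS2, det_mul]; ring

lemma PosDef.trace_inv_mul_nonneg {A M : Matrix n n ℝ} (hA : A.PosDef) (hM : M.PosSemidef) :
    0 ≤ (A⁻¹ * M).trace := by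
  obtain ⟨m, v, rfl⟩ := posSemidef_iff_eq_sum_vecMulVec.mp hM
  simp only [star_trivial, mul_sum, trace_sum, trace_mul_vecMulVec_self]
  exact sum_nonneg fun i _ => by simpa using hA.inv.posSemidef.dotProduct_mulVec_nonneg (v i)

lemma trace_inv_mul_le_trace_div {A M : Matrix n n ℝ} {c : ℝ} (hc : 0 < c)
    (hA : (A - c • 1).PosSemidef) (hM : M.PosSemidef) : (A⁻¹ * M).trace ≤ M.trace / c := by
  obtain ⟨m, v, rfl⟩ := posSemidef_iff_eq_sum_vecMulVec.mp hM
  simp only [star_trivial, mul_sum, trace_sum, trace_mul_vecMulVec_self, trace_vecMulVec, sum_div]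
  exact sum_le_sum fun i _ => dotProduct_inv_mulVec_le hc hA (v i)

lemma PosSemidef.det_le_trace_div_card_pow {A : Matrix n n ℝ} (hA : A.PosSemidef) :
    A.det ≤ (A.trace / Fintype.card n) ^ Fintype.card n := by
  have hH := hA.isHermitian
  rw [hH.det_eq_prod_eigenvalues, hH.trace_eq_sum_eigenvalues]
  simpa using prod_le_sum_div_card_pow univ fun i _ => hA.eigenvalues_nonneg i

lemma sum_trace_inv_mul_le_two_mul_log_det {V M : ℕ → Matrix n n ℝ} (hV0 : (V 0).PosDef)
    (hM : ∀ t, (M t).PosSemidef) (hV : ∀ t, V (t + 1) = V t + M t)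
    (hle : ∀ t, ((V t)⁻¹ * M t).trace ≤ 2) (T : ℕ) :
    ∑ t ∈ range T, ((V t)⁻¹ * M t).trace ≤ 2 * (log (V T).det - log (V 0).det) := by
  have hVpd : ∀ t, (V t).PosDef := by
    intro t
    induction t with
    | zero => exact hV0
    | succ t ih => rw [hV]; exact ih.add_posSemidef (hM t)
  have hstep : ∀ t, ((V t)⁻¹ * M t).trace ≤ 2 * (log (V (t + 1)).det - log (V t).det) := by
    intro t
    have ha := (hVpd t).trace_inv_mul_nonneg (hM t)
    have hdet := (hVpd t).det_pos
    have hlog : log (V t).det + log (1 + ((V t)⁻¹ * M t).trace) ≤ log (V (t + 1)).det := by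
      rw [← log_mul hdet.ne' (by positivity), hV]
      exact log_le_log (by positivity) ((hVpd t).det_mul_one_add_trace_le_det_add (hM t))
    linarith [self_le_two_mul_log_one_add ha (hle t)]
  calc _ ≤ ∑ t ∈ range T, 2 * (log (V (t + 1)).det - log (V t).det) :=
        sum_le_sum fun t _ => hstep t
    _ = _ := by rw [← mul_sum, sum_range_sub (fun t => log (V t).det)]

lemma PosDef.log_det_sub_card_mul_log_le {A : Matrix n n ℝ} (hA : A.PosDef) {b c : ℝ}
    (hc : 0 < c) (hb : A.trace ≤ b) :
    log A.det - Fintype.card n * log c ≤ Fintype.card n * log (b / (c * Fintype.card n)) := by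
  set m := Fintype.card n
  have hdet : A.det / c ^ m ≤ (b / (c * m)) ^ m := by
    rw [div_le_iff₀ (by positivity), ← mul_pow, mul_comm c, ← div_div, div_mul_cancel₀ _ hc.ne']
    calc A.det ≤ (A.trace / m) ^ m := hA.posSemidef.det_le_trace_div_card_pow
      _ ≤ (b / m) ^ m := by
        have := hA.posSemidef.trace_nonneg
        gcongr
  have := log_le_log (div_pos hA.det_pos (by positivity)) hdet
  rwa [log_div hA.det_pos.ne' (by positivity), log_pow, log_pow] at this

end Matrix

theorem stmt13_general {d k : ℕ} (T ℓ : ℕ) (hℓ : 0 < ℓ)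
    (lam : ℝ) (hlam : (ℓ : ℝ) ≤ lam)
    (s : ℕ → Finset (Fin k)) (x : ℕ → Fin k → EuclideanSpace ℝ (Fin d))
    (hx : ∀ t, ∀ i ∈ s t, ‖x t i‖ ≤ 1)
    (hcard : ∀ t, (s t).card ≤ ℓ)
    (Vmat : ℕ → Matrix (Fin d) (Fin d) ℝ)
    (hVmat : ∀ t, Vmat t = lam • (1 : Matrix (Fin d) (Fin d) ℝ) +
      ∑ τ ∈ Finset.range t, ∑ i ∈ s τ, vecMulVec (x τ i) (x τ i)) :
    ∑ t ∈ Finset.range T, ∑ i ∈ s t,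
        x t i ⬝ᵥ (Vmat t)⁻¹.mulVec (x t i)
      ≤ 2 * Real.log (Vmat T).det - 2 * d * Real.log lam ∧
    2 * Real.log (Vmat T).det - 2 * d * Real.log lam
      ≤ 2 * d * Real.log ((lam * d + T * ℓ) / (lam * d)) := by
  have hlam0 : 0 < lam := (Nat.cast_pos.mpr hℓ).trans_le hlam
  set M : ℕ → Matrix (Fin d) (Fin d) ℝ := fun t => ∑ i ∈ s t, vecMulVec (x t i) (x t i)
  have hM : ∀ t, (M t).PosSemidef := fun t =>
    posSemidef_sum _ fun i _ => posSemidef_vecMulVec_self_star _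
  have hMtr : ∀ t, (M t).trace ≤ ℓ := fun t =>
    (trace_sum_vecMulVec_le_card _ _ (hx t)).trans (Nat.cast_le.mpr (hcard t))
  have hV : ∀ t, Vmat (t + 1) = Vmat t + M t := by
    intro t; rw [hVmat, hVmat, sum_range_succ, add_assoc]
  have hVlam : ∀ t, (Vmat t - lam • 1).PosSemidef := by
    intro t; rw [hVmat, add_sub_cancel_left]; exact posSemidef_sum _ fun τ _ => hM τ
  have hround : ∀ t, ((Vmat t)⁻¹ * M t).trace ≤ 2 := fun t =>
    (trace_inv_mul_le_trace_div hlam0 (hVlam t) (hM t)).trans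
      (((div_le_one hlam0).mpr ((hMtr t).trans hlam)).trans one_le_two)
  have hdet0 : log (Vmat 0).det = d * log lam := by simp [hVmat, log_pow]
  have htrT : (Vmat T).trace ≤ lam * d + T * ℓ := by
    rw [hVmat, trace_add, trace_smul, trace_one, trace_sum, smul_eq_mul, Fintype.card_fin]
    grw [sum_le_sum fun t _ => hMtr t]
    simp
  have hsum : ∑ t ∈ range T, ∑ i ∈ s t, x t i ⬝ᵥ (Vmat t)⁻¹ *ᵥ x t i
      = ∑ t ∈ range T, ((Vmat t)⁻¹ * M t).trace := by
    simp only [M, mul_sum, trace_sum, trace_mul_vecMulVec_self]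
  have hpotential := sum_trace_inv_mul_le_two_mul_log_det
    (posDef_of_posSemidef_sub_smul_one hlam0 (hVlam 0)) hM hV hround T
  have hdetT := (posDef_of_posSemidef_sub_smul_one hlam0 (hVlam T)).log_det_sub_card_mul_log_le
    hlam0 htrT
  rw [Fintype.card_fin] at hdetT
  constructor <;> linarith

/-- Elliptical potential lemma (corrected Lemma 4.2 of C²UCB):
∑_{t,i} ‖x_t(i)‖²_{V_{t-1}⁻¹} ≤ 2 log det(V_T) − 2d log λ ≤ 2d log((λd+Tℓ)/(λd)). -/
theorem stmt13 {d k : ℕ} (hd : 0 < d) (T ℓ : ℕ) (hℓ : 0 < ℓ)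
    (lam : ℝ) (hlam : (ℓ : ℝ) ≤ lam)
    (s : ℕ → Finset (Fin k)) (x : ℕ → Fin k → EuclideanSpace ℝ (Fin d))
    (hx : ∀ t, ∀ i ∈ s t, ‖x t i‖ ≤ 1)
    (hcard : ∀ t, (s t).card ≤ ℓ)
    (Vmat : ℕ → Matrix (Fin d) (Fin d) ℝ)
    (hVmat : ∀ t, Vmat t = lam • (1 : Matrix (Fin d) (Fin d) ℝ) +
      ∑ τ ∈ Finset.range t, ∑ i ∈ s τ, vecMulVec (x τ i) (x τ i)) :
    ∑ t ∈ Finset.range T, ∑ i ∈ s t,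
        x t i ⬝ᵥ (Vmat t)⁻¹.mulVec (x t i)
      ≤ 2 * Real.log (Vmat T).det - 2 * d * Real.log lam ∧
    2 * Real.log (Vmat T).det - 2 * d * Real.log lam
      ≤ 2 * d * Real.log ((lam * d + T * ℓ) / (lam * d)) :=
  stmt13_general T ℓ hℓ lam hlam s x hx hcard Vmat hVmat
end

section
/- Greedy guarantee for cardinality/knapsack-free setting: Let f : 2^[k] → ℝ≥0 be a monotone submodular set function with f(∅) = 0, and let the greedy algorithm pick, over m steps, the element with the largest marginal gain. Then the greedy solution G of size m satisfies f(G) ≥ (1 − 1/e)·max_{|S| ≤ m} f(S). -/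
/-!
Let `S` be any set with `#S ≤ m` and `G` the current greedy set. By monotonicity and
submodularity, `f S - f G ≤ f (S ∪ G) - f G` is at most the sum of the marginal gains of the
elements of `S \ G` at `G`, hence at most `m` times the best marginal gain, which is the one the
greedy step realises. So each step shrinks the gap `f S - f G` by a factor `1 - 1/m`, and after
`m` steps the gap is at most `(1 - 1/m)^m f S ≤ f S / e`.
-/

open Finset

section Greedy

variable {α : Type*} [DecidableEq α] {f : Finset α → ℝ}

lemma sub_le_sum_sdiff_marginal_of_submodular
    (hsubmod : ∀ S T : Finset α, ∀ x : α, S ⊆ T → x ∉ T →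
      f (insert x T) - f T ≤ f (insert x S) - f S)
    (A B : Finset α) :
    f (A ∪ B) - f B ≤ ∑ x ∈ A \ B, (f (insert x B) - f B) := by
  induction A using Finset.induction_on with
  | empty => simp
  | @insert a A ha ih =>
    by_cases haB : a ∈ B
    · rwa [insert_union, insert_eq_of_mem (mem_union_right A haB), insert_sdiff_of_mem A haB]
    · have haAB : a ∉ A ∪ B := by simp [ha, haB]
      have hdim := hsubmod B (A ∪ B) a subset_union_right haAB
      rw [insert_union, insert_sdiff_of_notMem A haB,
        sum_insert fun h => ha (mem_sdiff.mp h).1]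
      linarith

lemma sub_le_card_mul_greedy_gain
    (hmono : ∀ S T : Finset α, S ⊆ T → f S ≤ f T)
    (hsubmod : ∀ S T : Finset α, ∀ x : α, S ⊆ T → x ∉ T →
      f (insert x T) - f T ≤ f (insert x S) - f S)
    {S G : Finset α} {x : α} (hx : ∀ y, f (insert y G) ≤ f (insert x G)) :
    f S - f G ≤ #S * (f (insert x G) - f G) := by
  have hgain : 0 ≤ f (insert x G) - f G := sub_nonneg.mpr (hmono _ _ (subset_insert x G))
  calc f S - f G ≤ f (S ∪ G) - f G := by linarith [hmono S (S ∪ G) subset_union_left]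
    _ ≤ ∑ y ∈ S \ G, (f (insert y G) - f G) :=
      sub_le_sum_sdiff_marginal_of_submodular hsubmod S G
    _ ≤ ∑ _y ∈ S \ G, (f (insert x G) - f G) := sum_le_sum fun y _ => by linarith [hx y]
    _ = #(S \ G) * (f (insert x G) - f G) := by rw [sum_const, nsmul_eq_mul]
    _ ≤ #S * (f (insert x G) - f G) := by
      gcongr
      exact sdiff_subset

lemma greedy_gap_le_of_greedy_step
    (hmono : ∀ S T : Finset α, S ⊆ T → f S ≤ f T)
    (hsubmod : ∀ S T : Finset α, ∀ x : α, S ⊆ T → x ∉ T →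
      f (insert x T) - f T ≤ f (insert x S) - f S)
    {m : ℕ} (hm : 0 < m) {S G : Finset α} (hS : #S ≤ m) {x : α}
    (hx : ∀ y, f (insert y G) ≤ f (insert x G)) :
    f S - f (insert x G) ≤ (1 - 1 / m) * (f S - f G) := by
  have hmR : (0 : ℝ) < m := by exact_mod_cast hm
  have hgain : 0 ≤ f (insert x G) - f G := sub_nonneg.mpr (hmono _ _ (subset_insert x G))
  have hbound : f S - f G ≤ m * (f (insert x G) - f G) :=
    (sub_le_card_mul_greedy_gain hmono hsubmod hx).trans
      (mul_le_mul_of_nonneg_right (by exact_mod_cast hS) hgain)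
  have hshare : (f S - f G) / m ≤ f (insert x G) - f G := by
    rwa [div_le_iff₀ hmR, mul_comm]
  calc f S - f (insert x G) = (f S - f G) - (f (insert x G) - f G) := by ring
    _ ≤ (f S - f G) - (f S - f G) / m := by linarith
    _ = (1 - 1 / m) * (f S - f G) := by ring

lemma greedy_gap_le
    (hmono : ∀ S T : Finset α, S ⊆ T → f S ≤ f T)
    (hsubmod : ∀ S T : Finset α, ∀ x : α, S ⊆ T → x ∉ T →
      f (insert x T) - f T ≤ f (insert x S) - f S)
    {m : ℕ} (G : ℕ → Finset α)
    (hgreedy : ∀ j < m, ∃ x : α, G (j + 1) = insert x (G j) ∧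
      ∀ y : α, f (insert y (G j)) ≤ f (insert x (G j)))
    {S : Finset α} (hS : #S ≤ m) :
    ∀ j ≤ m, f S - f (G j) ≤ (1 - 1 / m) ^ j * (f S - f (G 0)) := by
  intro j hj
  induction j with
  | zero => simp
  | succ j ih =>
    obtain ⟨x, hGx, hx⟩ := hgreedy j hj
    have hm : 0 < m := by omega
    have hfactor : (0 : ℝ) ≤ 1 - 1 / m := by
      rw [sub_nonneg, div_le_one (by exact_mod_cast hm)]
      exact_mod_cast hm
    calc f S - f (G (j + 1)) ≤ (1 - 1 / m) * (f S - f (G j)) := by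
          rw [hGx]
          exact greedy_gap_le_of_greedy_step hmono hsubmod hm hS hx
      _ ≤ (1 - 1 / m) * ((1 - 1 / m) ^ j * (f S - f (G 0))) := by
          gcongr
          exact ih (by omega)
      _ = (1 - 1 / m) ^ (j + 1) * (f S - f (G 0)) := by ring

end Greedy

theorem stmt15_general {k : ℕ} (m : ℕ) (f : Finset (Fin k) → ℝ)
    (hempty : f ∅ = 0)
    (hmono : ∀ S T : Finset (Fin k), S ⊆ T → f S ≤ f T)
    (hsubmod : ∀ S T : Finset (Fin k), ∀ x : Fin k, S ⊆ T → x ∉ T →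
      f (insert x T) - f T ≤ f (insert x S) - f S)
    (G : ℕ → Finset (Fin k))
    (hG0 : G 0 = ∅)
    (hgreedy : ∀ j < m, ∃ x : Fin k, G (j + 1) = insert x (G j) ∧
      ∀ y : Fin k, f (insert y (G j)) ≤ f (insert x (G j))) :
    ∀ S : Finset (Fin k), S.card ≤ m →
      (1 - 1 / Real.exp 1) * f S ≤ f (G m) := by
  intro S hS
  rcases Nat.eq_zero_or_pos m with rfl | hm
  · rw [card_eq_zero.mp (Nat.le_zero.mp hS), hG0, hempty, mul_zero]
  have hfS : 0 ≤ f S := hempty ▸ hmono ∅ S (empty_subset S)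
  have hgap := greedy_gap_le hmono hsubmod G hgreedy hS m le_rfl
  rw [hG0, hempty, sub_zero] at hgap
  have hexp : (1 - 1 / (m : ℝ)) ^ m ≤ 1 / Real.exp 1 := by
    simpa [Real.exp_neg] using
      Real.one_sub_div_pow_le_exp_neg (n := m) (t := 1) (by exact_mod_cast hm)
  nlinarith [mul_le_mul_of_nonneg_right hexp hfS]

/-- Nemhauser–Wolsey–Fisher greedy guarantee: for a monotone submodular
nonnegative set function with f(∅)=0, the m-step greedy solution G satisfies
f(G) ≥ (1 − 1/e)·max_{|S| ≤ m} f(S). -/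
theorem stmt15 {k : ℕ} (m : ℕ) (f : Finset (Fin k) → ℝ)
    (hnn : ∀ S, 0 ≤ f S)
    (hempty : f ∅ = 0)
    (hmono : ∀ S T : Finset (Fin k), S ⊆ T → f S ≤ f T)
    (hsubmod : ∀ S T : Finset (Fin k), ∀ x : Fin k, S ⊆ T → x ∉ T →
      f (insert x T) - f T ≤ f (insert x S) - f S)
    (G : ℕ → Finset (Fin k))
    (hG0 : G 0 = ∅)
    (hgreedy : ∀ j < m, ∃ x : Fin k, G (j + 1) = insert x (G j) ∧
      ∀ y : Fin k, f (insert y (G j)) ≤ f (insert x (G j))) :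
    ∀ S : Finset (Fin k), S.card ≤ m →
      (1 - 1 / Real.exp 1) * f S ≤ f (G m) :=
  stmt15_general m f hempty hmono hsubmod G hG0 hgreedy
end
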